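/- Let i, k, l be natural numbers with i ≤ k and i ≤ l, and let t ∈ F. Then Σ_{j=0}^{l} [l choose j]_q [k+j choose i]_q (-1)^{l-j} (-q^i t; q)_{k+j-i} q^{j(j+1)/2 - lj + i(i-1)/2} = Σ_{j=0}^{k} [k choose j]_q [l+j choose i]_q t^{l+j-i} q^{kl + j(j-1)/2}. -/

import Mathlib

/-!
Expanding `(-q^i t; q)_{k+j-i}` by the `q`-binomial theorem and using
`[n, i] [n - i, m] = [n, i + m] [i + m, i]`, the left side becomes, up to the factor
`q^{C(i,2) - C(l,2)}`, the sum over `m` of `[i + m, i] q^{C(m,2)} (q^i t)^m` times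
`((E - 1)(E - q) ⋯ (E - q^{l-1}) [·, i + m])(k)`, `E` being the shift. By the `q`-Pascal rule
`[n + 1, s + 1] - [n, s + 1] = q^{n-s} [n, s]`, this operator sends `[·, r]` to
`k ↦ q^{l(k+l-r)} [k, r - l]` if `r ≥ l` and to `0` if `r < l`; the substitution
`m = l - i + j` then gives the right side.
-/

open Finset

/-- The q-Pochhammer symbol `(a;q)_n = ∏_{j=0}^{n-1} (1 - a q^j)`. -/
def qPoch {F : Type*} [Field F] (q a : F) (n : ℕ) : F :=
  ∏ j ∈ Finset.range n, (1 - a * q ^ j)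

/-- The q-binomial coefficient `[n choose i]_q`, equal to 0 when `i > n`. -/
def qBinom {F : Type*} [Field F] (q : F) (n i : ℕ) : F :=
  if i ≤ n then qPoch q q n / (qPoch q q i * qPoch q q (n - i)) else 0

/-- The q-integer `[n]_q = (1-q^n)/(1-q)`. -/
def qInt {F : Type*} [Field F] (q : F) (n : ℕ) : F := (1 - q ^ n) / (1 - q)

/-- The q-dual sequence `a*_n = ∑_{i=0}^n (-1)^i [n choose i]_q q^{i(i-1)/2} a_i`. -/
def qDual {F : Type*} [Field F] (q : F) (a : ℕ → F) (n : ℕ) : F :=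
  ∑ i ∈ Finset.range (n + 1), (-1 : F) ^ i * qBinom q n i * q ^ (i.choose 2) * a i

theorem Nat.choose_two_sub {l j : ℕ} (h : j ≤ l) :
    ((l - j).choose 2 : ℤ) = l.choose 2 + (j + 1).choose 2 - l * j := by
  obtain ⟨d, rfl⟩ := Nat.exists_eq_add_of_le h
  rw [Nat.add_sub_cancel_left]
  qify [Nat.cast_choose_two]
  ring

theorem Nat.succ_choose_two (n : ℕ) : (n + 1).choose 2 = n.choose 2 + n := by
  qify [Nat.cast_choose_two]
  ring

lemma zpow_choose_two_succ_sub_mul {F : Type*} [Field F] {q : F} (hq0 : q ≠ 0) {l j : ℕ}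
    (h : j ≤ l) (i : ℕ) :
    q ^ (((j + 1).choose 2 : ℤ) - (l : ℤ) * (j : ℤ) + (i.choose 2 : ℤ)) =
      q ^ i.choose 2 / q ^ l.choose 2 * q ^ (l - j).choose 2 := by
  rw [show ((j + 1).choose 2 : ℤ) - l * j + i.choose 2 =
      (((l - j).choose 2 + i.choose 2 : ℕ) : ℤ) - (l.choose 2 : ℕ) by
    push_cast [Nat.choose_two_sub h]; ring, zpow_sub₀ hq0, zpow_natCast, zpow_natCast, pow_add]
  ring

section
variable {F : Type*} [Field F] (q : F)

lemma qPoch_zero (a : F) : qPoch q a 0 = 1 :=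
  prod_range_zero _

lemma qPoch_succ (a : F) (n : ℕ) : qPoch q a (n + 1) = qPoch q a n * (1 - a * q ^ n) :=
  prod_range_succ _ n

lemma qBinom_of_lt {n i : ℕ} (h : n < i) : qBinom q n i = 0 :=
  if_neg h.not_ge

lemma qBinom_eq_div {n a b : ℕ} (h : a + b = n) :
    qBinom q n a = qPoch q q n / (qPoch q q a * qPoch q q b) := by
  rw [qBinom, if_pos (by omega), show n - a = b by omega]

variable {q} (hq : ∀ m : ℕ, 0 < m → q ^ m ≠ 1)
include hq

lemma one_sub_pow_ne_zero {m : ℕ} (hm : 0 < m) : (1 : F) - q ^ m ≠ 0 :=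
  sub_ne_zero.2 (hq m hm).symm

lemma qPoch_self_ne_zero (n : ℕ) : qPoch q q n ≠ 0 :=
  prod_ne_zero_iff.2 fun j _ => by
    simpa only [← pow_succ'] using one_sub_pow_ne_zero hq j.succ_pos

lemma qBinom_zero_right (n : ℕ) : qBinom q n 0 = 1 := by
  rw [qBinom_eq_div q (zero_add n), qPoch_zero, one_mul,
    div_self (qPoch_self_ne_zero hq n)]

lemma qBinom_self (n : ℕ) : qBinom q n n = 1 := by
  rw [qBinom_eq_div q (add_zero n), qPoch_zero, mul_one,
    div_self (qPoch_self_ne_zero hq n)]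

lemma qBinom_succ_succ_of_lt {n j : ℕ} (h : j < n) :
    qBinom q (n + 1) (j + 1) = qBinom q n j + q ^ (j + 1) * qBinom q n (j + 1) ∧
    qBinom q (n + 1) (j + 1) = q ^ (n - j) * qBinom q n j + qBinom q n (j + 1) := by
  obtain ⟨d, rfl⟩ : ∃ d, n = j + d + 1 := ⟨n - j - 1, by omega⟩
  rw [qBinom_eq_div q (show (j + 1) + (d + 1) = j + d + 1 + 1 by omega),
    qBinom_eq_div q (show j + (d + 1) = j + d + 1 by omega),
    qBinom_eq_div q (show (j + 1) + d = j + d + 1 by omega),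
    show j + d + 1 - j = d + 1 by omega]
  simp only [qPoch_succ]
  have := qPoch_self_ne_zero hq j
  have := qPoch_self_ne_zero hq d
  have := one_sub_pow_ne_zero hq j.succ_pos
  have := one_sub_pow_ne_zero hq d.succ_pos
  simp only [← pow_succ'] at *
  constructor <;> (field_simp; ring)

lemma qBinom_succ_succ (n j : ℕ) :
    qBinom q (n + 1) (j + 1) = qBinom q n j + q ^ (j + 1) * qBinom q n (j + 1) := by
  rcases lt_trichotomy j n with h | rfl | h
  · exact (qBinom_succ_succ_of_lt hq h).1
  · simp [qBinom_self hq, qBinom_of_lt]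
  · simp [qBinom_of_lt, h, h.trans (Nat.lt_succ_self j)]

lemma qBinom_succ_succ' (n j : ℕ) :
    qBinom q (n + 1) (j + 1) = q ^ (n - j) * qBinom q n j + qBinom q n (j + 1) := by
  rcases lt_trichotomy j n with h | rfl | h
  · exact (qBinom_succ_succ_of_lt hq h).2
  · simp [qBinom_self hq, qBinom_of_lt]
  · simp [qBinom_of_lt, h, h.trans (Nat.lt_succ_self j)]

lemma qBinom_mul_qBinom_sub (n a b : ℕ) :
    qBinom q n a * qBinom q (n - a) b = qBinom q n (a + b) * qBinom q (a + b) a := by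
  by_cases hab : a + b ≤ n
  · obtain ⟨c, rfl⟩ := Nat.exists_eq_add_of_le hab
    rw [qBinom_eq_div q (show a + (b + c) = a + b + c by omega), Nat.add_assoc,
      Nat.add_sub_cancel_left, qBinom_eq_div q rfl, ← Nat.add_assoc, qBinom_eq_div q rfl,
      qBinom_eq_div q rfl]
    have := qPoch_self_ne_zero hq a
    have := qPoch_self_ne_zero hq b
    have := qPoch_self_ne_zero hq c
    have := qPoch_self_ne_zero hq (a + b)
    have := qPoch_self_ne_zero hq (b + c)
    field_simp
  · rw [qBinom_of_lt q (show n < a + b by omega)]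
    by_cases ha : a ≤ n
    · rw [qBinom_of_lt q (show n - a < b by omega), mul_zero, zero_mul]
    · rw [qBinom_of_lt q (show n < a by omega), zero_mul, zero_mul]

theorem qPoch_neg_eq_sum (n : ℕ) (x : F) :
    qPoch q (-x) n = ∑ m ∈ range (n + 1), qBinom q n m * q ^ m.choose 2 * x ^ m := by
  induction n with
  | zero => simp [qPoch_zero, qBinom_self hq]
  | succ n ih =>
    have hterm : ∀ m ∈ range (n + 1),
        qBinom q (n + 1) (m + 1) * q ^ (m + 1).choose 2 * x ^ (m + 1) =
          qBinom q n m * q ^ m.choose 2 * x ^ m * (x * q ^ n) +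
            qBinom q n (m + 1) * q ^ (m + 1).choose 2 * x ^ (m + 1) := by
      intro m hm
      have hexp : n - m + (m + 1).choose 2 = m.choose 2 + n := by
        have := mem_range.1 hm
        rw [Nat.succ_choose_two]
        omega
      have hpow : q ^ (n - m) * q ^ (m + 1).choose 2 = q ^ m.choose 2 * q ^ n := by
        rw [← pow_add, hexp, pow_add]
      rw [qBinom_succ_succ' hq]
      linear_combination (qBinom q n m * x ^ (m + 1)) * hpow
    have hshift : qPoch q (-x) n =
        ∑ m ∈ range n, qBinom q n (m + 1) * q ^ (m + 1).choose 2 * x ^ (m + 1) + 1 := by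
      simp [ih, sum_range_succ' _ n, qBinom_zero_right hq]
    rw [sum_range_succ', sum_congr rfl hterm, sum_add_distrib, ← sum_mul, ← ih, sum_range_succ,
      qBinom_of_lt q (Nat.lt_succ_self n), qBinom_zero_right hq, qPoch_succ,
      Nat.choose_zero_succ, pow_zero]
    linear_combination hshift

theorem qPoch_neg_eq_sum_of_le {n N : ℕ} (hn : n ≤ N) (x : F) :
    qPoch q (-x) n = ∑ m ∈ range (N + 1), qBinom q n m * q ^ m.choose 2 * x ^ m := by
  rw [qPoch_neg_eq_sum hq]
  refine sum_subset (range_subset_range.2 (by omega)) fun m _ hm => ?_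
  rw [qBinom_of_lt q (by simpa using hm), zero_mul, zero_mul]

lemma qBinom_mul_qPoch_neg_eq_sum {n i N : ℕ} (hN : n - i ≤ N) (y : F) :
    qBinom q n i * qPoch q (-y) (n - i) =
      ∑ m ∈ range (N + 1),
        qBinom q (i + m) i * q ^ m.choose 2 * y ^ m * qBinom q n (i + m) := by
  rw [qPoch_neg_eq_sum_of_le hq hN, mul_sum]
  refine sum_congr rfl fun m _ => ?_
  linear_combination (q ^ m.choose 2 * y ^ m) * qBinom_mul_qBinom_sub hq n i m

end

section
variable {F : Type*} [Field F]

/-- `qDiff q f l k = ((E - 1) (E - q) ⋯ (E - q ^ (l - 1)) f) k`, where `E` is the shift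
`f ↦ f (· + 1)`: the product expanded by the `q`-binomial theorem. -/
def qDiff (q : F) (f : ℕ → F) (l k : ℕ) : F :=
  ∑ j ∈ range (l + 1), (-1) ^ (l - j) * qBinom q l j * q ^ (l - j).choose 2 * f (k + j)

variable {q : F}

lemma qDiff_zero (f : ℕ → F) (k : ℕ) : qDiff q f 0 k = f k := by
  simp [qDiff, qBinom, qPoch_zero]

lemma qDiff_sum {ι : Type*} (s : Finset ι) (c : ι → F) (f : ι → ℕ → F) (l k : ℕ) :
    qDiff q (fun n => ∑ m ∈ s, c m * f m n) l k = ∑ m ∈ s, c m * qDiff q (f m) l k := by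
  simp only [qDiff, mul_sum]
  rw [sum_comm]
  exact sum_congr rfl fun m _ => sum_congr rfl fun j _ => by ring

variable (hq : ∀ m : ℕ, 0 < m → q ^ m ≠ 1)
include hq

lemma qDiff_succ (f : ℕ → F) (l k : ℕ) :
    qDiff q f (l + 1) k = qDiff q f l (k + 1) - q ^ l * qDiff q f l k := by
  set g : ℕ → F := fun j => (-1) ^ (l - j) * qBinom q l j * q ^ (l - j).choose 2 * f (k + j)
  set h : ℕ → F := fun j =>
    (-1) ^ (l - j) * q ^ (j + 1) * qBinom q l (j + 1) * q ^ (l - j).choose 2 * f (k + (j + 1))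
  have hpascal : ∀ j ∈ range (l + 1),
      (-1) ^ (l + 1 - (j + 1)) * qBinom q (l + 1) (j + 1) * q ^ (l + 1 - (j + 1)).choose 2 *
          f (k + (j + 1)) =
        (-1) ^ (l - j) * qBinom q l j * q ^ (l - j).choose 2 * f (k + 1 + j) + h j := by
    intro j _
    rw [qBinom_succ_succ hq, Nat.add_sub_add_right, Nat.add_right_comm k 1 j, Nat.add_assoc k j 1]
    ring
  have hshift : ∀ j ∈ range l, h j = -q ^ l * g (j + 1) := by
    intro j hj
    obtain ⟨d, rfl⟩ : ∃ d, l = j + 1 + d := ⟨l - j - 1, by simp at hj; omega⟩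
    simp only [g, h, show j + 1 + d - j = d + 1 by omega, Nat.add_sub_cancel_left,
      Nat.succ_choose_two]
    ring
  have hboundary :
      (-1) ^ (l + 1 - 0) * qBinom q (l + 1) 0 * q ^ (l + 1 - 0).choose 2 * f (k + 0) =
        -q ^ l * g 0 := by
    simp only [g, Nat.sub_zero, qBinom_zero_right hq, Nat.succ_choose_two]
    ring
  simp only [qDiff]
  rw [sum_range_succ', sum_congr rfl hpascal, sum_add_distrib, sum_range_succ h l,
    sum_congr rfl hshift, hboundary, ← mul_sum, sum_range_succ' g l]
  simp only [h, qBinom_of_lt q (Nat.lt_succ_self l)]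
  ring

theorem qDiff_qBinom (r l k : ℕ) :
    qDiff q (fun n => qBinom q n r) l k =
      if l ≤ r then q ^ (l * (k + l - r)) * qBinom q k (r - l) else 0 := by
  induction l generalizing k with
  | zero => simp [qDiff_zero]
  | succ l ih =>
    rw [qDiff_succ hq, ih, ih]
    by_cases hlr : l + 1 ≤ r
    · obtain ⟨s, rfl⟩ := Nat.exists_eq_add_of_le hlr
      rw [if_pos (by omega), if_pos (by omega), if_pos hlr, Nat.add_sub_cancel_left,
        show l + 1 + s - l = s + 1 by omega, show k + 1 + l - (l + 1 + s) = k - s by omega,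
        show k + (l + 1) - (l + 1 + s) = k - s by omega,
        show k + l - (l + 1 + s) = k - (s + 1) by omega, qBinom_succ_succ' hq k s]
      rcases lt_or_ge s k with hsk | hsk
      · rw [show k - s = k - (s + 1) + 1 by omega]
        ring
      · rw [qBinom_of_lt q (by omega : k < s + 1), Nat.sub_eq_zero_of_le hsk]
        ring
    · rw [if_neg hlr]
      by_cases hl : l = r
      · subst hl
        rw [if_pos le_rfl, if_pos le_rfl, Nat.sub_self, qBinom_zero_right hq,
          qBinom_zero_right hq, Nat.add_sub_cancel, Nat.add_sub_cancel]
        ring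
      · rw [if_neg (by omega), if_neg (by omega), mul_zero, sub_zero]

lemma sum_qBinom_mul_qPoch_eq_sum_qDiff (hq0 : q ≠ 0) {i k l N : ℕ} (hN : k + l - i ≤ N)
    (t : F) :
    ∑ j ∈ range (l + 1), qBinom q l j * qBinom q (k + j) i *
        (-1 : F) ^ (l - j) * qPoch q (-(q ^ i * t)) (k + j - i) *
        q ^ (((j + 1).choose 2 : ℤ) - (l : ℤ) * (j : ℤ) + (i.choose 2 : ℤ)) =
      q ^ i.choose 2 / q ^ l.choose 2 * ∑ m ∈ range (N + 1),
        qBinom q (i + m) i * q ^ m.choose 2 * (q ^ i * t) ^ m *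
          qDiff q (fun n => qBinom q n (i + m)) l k := by
  rw [← qDiff_sum, qDiff, mul_sum]
  refine sum_congr rfl fun j hj => ?_
  have hj : j ≤ l := Nat.lt_succ_iff.1 (mem_range.1 hj)
  rw [zpow_choose_two_succ_sub_mul hq0 hj]
  linear_combination (q ^ i.choose 2 / q ^ l.choose 2 * (-1) ^ (l - j) * qBinom q l j *
    q ^ (l - j).choose 2) *
      qBinom_mul_qPoch_neg_eq_sum hq (show k + j - i ≤ N by omega) (q ^ i * t)

end

theorem stmt16_general {F : Type*} [Field F] (q : F) (hq0 : q ≠ 0)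
    (hq : ∀ m : ℕ, 0 < m → q ^ m ≠ 1) (i k l : ℕ) (hil : i ≤ l)
    (t : F) :
    ∑ j ∈ Finset.range (l + 1), qBinom q l j * qBinom q (k + j) i *
        (-1 : F) ^ (l - j) * qPoch q (-(q ^ i * t)) (k + j - i) *
        q ^ (((j + 1).choose 2 : ℤ) - (l : ℤ) * (j : ℤ) + (i.choose 2 : ℤ)) =
    ∑ j ∈ Finset.range (k + 1), qBinom q k j * qBinom q (l + j) i *
        t ^ (l + j - i) * q ^ (k * l + j.choose 2) := by
  obtain ⟨a, rfl⟩ := Nat.exists_eq_add_of_le hil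
  rw [sum_qBinom_mul_qPoch_eq_sum_qDiff hq hq0 (N := a + k) (by omega), Nat.add_assoc,
    sum_range_add, sum_eq_zero fun m hm => ?_, zero_add, mul_sum]
  · refine sum_congr rfl fun j hj => ?_
    obtain ⟨e, rfl⟩ := Nat.exists_eq_add_of_le (Nat.lt_succ_iff.1 (mem_range.1 hj))
    rw [qDiff_qBinom hq, if_pos (by omega), show j + e + (i + a) - (i + (a + j)) = e by omega,
      show i + (a + j) - (i + a) = j by omega, show i + a + j - i = a + j by omega]
    have hpow : q ^ i.choose 2 * (q ^ (a + j).choose 2 * q ^ (i * (a + j)) * q ^ ((i + a) * e)) =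
        q ^ (i + a).choose 2 * q ^ ((j + e) * (i + a) + j.choose 2) := by
      simp only [← pow_add]
      congr 1
      qify [Nat.cast_choose_two]
      ring
    rw [mul_pow, ← pow_mul, Nat.add_assoc i a j]
    field_simp
    linear_combination (qBinom q (j + e) j * qBinom q (i + (a + j)) i * t ^ (a + j)) * hpow
  · rw [qDiff_qBinom hq, if_neg (by simp at hm; omega), mul_zero]

theorem stmt16 {F : Type*} [Field F] (q : F) (hq0 : q ≠ 0)
    (hq : ∀ m : ℕ, 0 < m → q ^ m ≠ 1) (i k l : ℕ) (hik : i ≤ k) (hil : i ≤ l)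
    (t : F) :
    ∑ j ∈ Finset.range (l + 1), qBinom q l j * qBinom q (k + j) i *
        (-1 : F) ^ (l - j) * qPoch q (-(q ^ i * t)) (k + j - i) *
        q ^ (((j + 1).choose 2 : ℤ) - (l : ℤ) * (j : ℤ) + (i.choose 2 : ℤ)) =
    ∑ j ∈ Finset.range (k + 1), qBinom q k j * qBinom q (l + j) i *
        t ^ (l + j - i) * q ^ (k * l + j.choose 2) :=
  stmt16_general q hq0 hq i k l hil t
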